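/- arXiv:1905.11823 — 2 statements merged into one kernel-verified Lean document; each statement's English description precedes it below -/
import Mathlib

section
/- Let (X,d) be a complete geodesic metric space and I : X → ℝ ∪ {+∞} a proper, lower semicontinuous, λ-geodesically convex functional. Let μ, ν ∈ D(I), let Γ be the set of all continuous curves γ : [0,1] → X with γ(0) = μ and γ(1) = ν, define Υ(γ) = sup_{t∈[0,1]} I(γ(t)), and set c = inf_{γ∈Γ} Υ(γ) and c₁ = max{I(μ), I(ν)}. If c > c₁ and I satisfies the weak metric Palais–Smale condition, then c is a critical value of I: there exists η ∈ X with I(η) = c and |∂I|(η) = |dI|(η) = 0. (This is the abstract form of the paper's mountain pass theorem, which applies in particular to the Wasserstein space P₂(M) over a complete connected smooth Riemannian manifold M.) -/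
open Set Metric Filter
open scoped ENNReal Topology

/-- A point `x` is a `δ`-regular point of the (continuous) function `J`: there are a
neighbourhood `U` of `x`, a constant `α > 0` and a continuous map `ψ : U × [0,α] → Y` with
`d(ψ(u,t),u) ≤ t` and `J(u) - J(ψ(u,t)) ≥ δ t`. -/
def IsDeltaRegular {Y : Type*} [MetricSpace Y] (J : Y → ℝ) (x : Y) (δ : ℝ) : Prop :=
  ∃ U ∈ 𝓝 x, ∃ α : ℝ, 0 < α ∧ ∃ ψ : Y → ℝ → Y,
    ContinuousOn (fun p : Y × ℝ => ψ p.1 p.2) (U ×ˢ Icc 0 α) ∧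
    ∀ u ∈ U, ∀ t ∈ Icc (0:ℝ) α, dist (ψ u t) u ≤ t ∧ δ * t ≤ J u - J (ψ u t)

/-- The weak metric slope `|dJ|(x)` of a (continuous) function `J` at `x`: the supremum of all
`δ > 0` such that `x` is a `δ`-regular point of `J` (equal to `0` if there is no such `δ`). -/
noncomputable def weakSlope {Y : Type*} [MetricSpace Y] (J : Y → ℝ) (x : Y) : ℝ≥0∞ :=
  ⨆ δ ∈ {δ : ℝ | 0 < δ ∧ IsDeltaRegular J x δ}, ENNReal.ofReal δ

/-- The weak metric Palais–Smale condition: every sequence along which `J` converges to a real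
number and the weak metric slope tends to `0` has a convergent subsequence. -/
def WeakPalaisSmale {Y : Type*} [MetricSpace Y] (J : Y → ℝ) : Prop :=
  ∀ (u : ℕ → Y) (c : ℝ),
    Tendsto (fun n => J (u n)) atTop (𝓝 c) →
    Tendsto (fun n => weakSlope J (u n)) atTop (𝓝 0) →
    ∃ (y : Y) (φ : ℕ → ℕ), StrictMono φ ∧ Tendsto (u ∘ φ) atTop (𝓝 y)

/-- The epigraph `epi(I) = {(u,ξ) : I(u) ≤ ξ}` of a functional `I : X → ℝ ∪ {+∞}`, equipped
(via `WithLp 2`) with the graph metric `d_epi((u,ξ),(v,ζ)) = √(d(u,v)² + |ξ-ζ|²)`. -/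
abbrev Epi {X : Type*} [MetricSpace X] (I : X → EReal) : Type _ :=
  {p : WithLp 2 (X × ℝ) //
    I ((WithLp.equiv 2 (X × ℝ)) p).1 ≤ ((((WithLp.equiv 2 (X × ℝ)) p).2 : ℝ) : EReal)}

/-- The point of an epigraph element `(u, ξ)` of the epigraph of `I`. -/
noncomputable def Epi.pt {X : Type*} [MetricSpace X] {I : X → EReal} (p : Epi I) : X :=
  ((WithLp.equiv 2 (X × ℝ)) p.1).1

/-- Build an element of the epigraph of `I` from `x : X` and `ξ : ℝ` with `I x ≤ ξ`. -/
noncomputable def Epi.mk' {X : Type*} [MetricSpace X] (I : X → EReal) (x : X) (ξ : ℝ)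
    (h : I x ≤ (ξ : EReal)) : Epi I :=
  ⟨(WithLp.equiv 2 (X × ℝ)).symm (x, ξ), by simpa using h⟩

/-- The epigraph extension `G_I : epi(I) → ℝ`, `G_I(u,ξ) = ξ`. -/
noncomputable def epiExt {X : Type*} [MetricSpace X] (I : X → EReal) (p : Epi I) : ℝ :=
  ((WithLp.equiv 2 (X × ℝ)) p.1).2

/-- The weak metric slope `|dI|(x)` of a proper lower semicontinuous functional
`I : X → ℝ ∪ {+∞}` at a point `x ∈ D(I)`, defined through the weak metric slope of the
epigraph extension `G_I` at `(x, I(x))`. -/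
noncomputable def lscWeakSlope {X : Type*} [MetricSpace X] (I : X → EReal) (x : X) : ℝ≥0∞ :=
  if hx : I x ≤ (((I x).toReal : ℝ) : EReal) then
    let s := weakSlope (epiExt I) (Epi.mk' I x (I x).toReal hx)
    if s < 1 then ENNReal.ofReal (s.toReal / Real.sqrt (1 - s.toReal ^ 2)) else ⊤
  else ⊤

/-- The weak metric Palais–Smale condition for a proper l.s.c. functional `I : X → ℝ ∪ {+∞}`. -/
def WeakPalaisSmaleLSC {X : Type*} [MetricSpace X] (I : X → EReal) : Prop :=
  ∀ (u : ℕ → X) (c : ℝ),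
    Tendsto (fun n => I (u n)) atTop (𝓝 ((c : EReal))) →
    Tendsto (fun n => lscWeakSlope I (u n)) atTop (𝓝 0) →
    ∃ (y : X) (φ : ℕ → ℕ), StrictMono φ ∧ Tendsto (u ∘ φ) atTop (𝓝 y)

/-- The (strong) metric slope `|∂J|(x) = limsup_{y → x} (J(x) - J(y))₊ / d(x,y)` of a
real-valued function. -/
noncomputable def metricSlopeReal {Y : Type*} [MetricSpace Y] (J : Y → ℝ) (x : Y) : ℝ≥0∞ :=
  limsup (fun y => ENNReal.ofReal (max (J x - J y) 0 / dist x y)) (𝓝[≠] x)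

/-- The (strong) metric slope of a functional `I : X → ℝ ∪ {+∞}`, equal to `+∞` outside of the
domain of `I`. -/
noncomputable def metricSlope {X : Type*} [MetricSpace X] (I : X → EReal) (x : X) : ℝ≥0∞ :=
  if I x = ⊤ then ⊤
  else limsup (fun y => ENNReal.ofReal ((max (I x - I y) 0).toReal / dist x y)) (𝓝[≠] x)

/-- `γ : [0,1] → Y` is a unit speed minimising geodesic from `x₀` to `x₁`. -/
def IsUnitSpeedGeodesic {Y : Type*} [MetricSpace Y] (γ : ℝ → Y) (x₀ x₁ : Y) : Prop :=
  ContinuousOn γ (Icc 0 1) ∧ γ 0 = x₀ ∧ γ 1 = x₁ ∧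
    ∀ s ∈ Icc (0:ℝ) 1, ∀ t ∈ Icc (0:ℝ) 1, dist (γ s) (γ t) = |s - t| * dist x₀ x₁

/-- A geodesic metric space: any two points are joined by a unit speed minimising geodesic. -/
def IsGeodesicSpace (Y : Type*) [MetricSpace Y] : Prop :=
  ∀ x₀ x₁ : Y, ∃ γ : ℝ → Y, IsUnitSpeedGeodesic γ x₀ x₁

/-- `I` is `λ`-geodesically convex. -/
def GeodesicallyConvex {X : Type*} [MetricSpace X] (I : X → EReal) (lam : ℝ) : Prop :=
  ∀ x₀ x₁ : X, I x₀ ≠ ⊤ → I x₁ ≠ ⊤ →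
    ∀ γ : ℝ → X, IsUnitSpeedGeodesic γ x₀ x₁ → ∀ t ∈ Icc (0:ℝ) 1,
      I (γ t) ≤ ((1 - t : ℝ) : EReal) * I x₀ + ((t : ℝ) : EReal) * I x₁
        - (((lam / 2) * t * (1 - t) * dist x₀ x₁ ^ 2 : ℝ) : EReal)

/-!
Ekeland's principle, applied to a truncation of `I`, shows that if no point with value near `c`
had small slope, every point of a path at a level slightly above `c` could be moved a bounded
distance into a sublevel set slightly below `c`. Sampling such a path finely, moving the samples and joining them by
geodesics, along which `λ`-convexity controls `I`, gives a path below `c`: a contradiction. This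
yields a Palais–Smale sequence at level `c`, which converges to some `η` along a subsequence.
Letting `u → η` in the convexity estimate `I u - I y + (λ/2) d(u,y)² ≤ |∂I|(u) d(u,y)` gives
`I ≥ c + (λ/2) d(η, ·)²` and `I η = c`, hence `|∂I|(η) = 0`; finally `|dI| ≤ |∂I|` because a
`δ`-regular deformation of `G_I` at `(x, I x)` makes `I` descend at rate `δ`.
-/

lemma EReal.toReal_max_coe_sub_coe_zero (a b : ℝ) :
    (max ((a : EReal) - b) 0).toReal = max (a - b) 0 := by
  rw [← EReal.coe_sub]; norm_cast

namespace EReal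

noncomputable def clampToReal (a b : ℝ) (e : EReal) : ℝ := (max (a : EReal) (min e b)).toReal

variable {a b : ℝ}

lemma coe_clampToReal (hab : a ≤ b) (e : EReal) :
    ((clampToReal a b e : ℝ) : EReal) = max (a : EReal) (min e b) :=
  coe_toReal
    (ne_top_of_le_ne_top (coe_ne_top b) (max_le (EReal.coe_le_coe_iff.2 hab) (min_le_right _ _)))
    (ne_bot_of_le_ne_bot (coe_ne_bot a) (le_max_left _ _))

lemma le_clampToReal (hab : a ≤ b) (e : EReal) : a ≤ clampToReal a b e := by
  rw [← EReal.coe_le_coe_iff, coe_clampToReal hab]; exact le_max_left _ _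

lemma clampToReal_le (hab : a ≤ b) (e : EReal) : clampToReal a b e ≤ b := by
  rw [← EReal.coe_le_coe_iff, coe_clampToReal hab]
  exact max_le (EReal.coe_le_coe_iff.2 hab) (min_le_right _ _)

lemma clampToReal_coe {v : ℝ} (hav : a ≤ v) (hvb : v ≤ b) : clampToReal a b v = v := by
  rw [← EReal.coe_eq_coe_iff, coe_clampToReal (hav.trans hvb),
    min_eq_left (EReal.coe_le_coe_iff.2 hvb), max_eq_right (EReal.coe_le_coe_iff.2 hav)]

lemma clampToReal_of_le (hab : a ≤ b) {e : EReal} (he : b ≤ e) : clampToReal a b e = b := by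
  rw [← EReal.coe_eq_coe_iff, coe_clampToReal hab, min_eq_right he,
    max_eq_right (EReal.coe_le_coe_iff.2 hab)]

lemma monotone_clampToReal (hab : a ≤ b) : Monotone (clampToReal a b) := fun e f hef => by
  rw [← EReal.coe_le_coe_iff, coe_clampToReal hab, coe_clampToReal hab]
  exact max_le_max le_rfl (min_le_min_right _ hef)

lemma continuous_clampToReal (hab : a ≤ b) : Continuous (clampToReal a b) :=
  continuousOn_toReal.comp_continuous (continuous_const.max (continuous_id.min continuous_const))
    fun e => by simp [← coe_clampToReal hab e]

end EReal

section Ekeland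

variable {Y : Type*} [MetricSpace Y] {J : Y → ℝ} {κ : ℝ}

def ekelandSet (J : Y → ℝ) (κ : ℝ) (z : Y) : Set Y := {w | J w + κ * dist z w ≤ J z}

lemma mem_ekelandSet_self (z : Y) : z ∈ ekelandSet J κ z := by simp [ekelandSet]

lemma LowerSemicontinuous.isClosed_ekelandSet (hJ : LowerSemicontinuous J) (z : Y) :
    IsClosed (ekelandSet J κ z) :=
  (hJ.add (by fun_prop : Continuous fun w => κ * dist z w).lowerSemicontinuous).isClosed_preimage
    (J z)

lemma ekelandSet_subset (hκ : 0 ≤ κ) {z w : Y} (hw : w ∈ ekelandSet J κ z) :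
    ekelandSet J κ w ⊆ ekelandSet J κ z := fun v hv => by
  simp only [ekelandSet, mem_ofPred_eq] at hw hv ⊢
  nlinarith [dist_triangle z w v]

lemma exists_mem_ekelandSet_subset_closedBall (hJb : BddBelow (range J)) (hκ : 0 < κ) (z : Y)
    {r : ℝ} (hr : 0 < r) : ∃ w ∈ ekelandSet J κ z, ekelandSet J κ w ⊆ closedBall w r := by
  obtain ⟨_, ⟨w, hw, rfl⟩, hw_lt⟩ := exists_lt_of_csInf_lt
    (⟨J z, z, mem_ekelandSet_self z, rfl⟩ : (J '' ekelandSet J κ z).Nonempty)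
    (lt_add_of_pos_right _ (mul_pos hκ hr))
  refine ⟨w, hw, fun v hv => ?_⟩
  have hinf := csInf_le (hJb.mono (image_subset_range _ _)) ⟨v, ekelandSet_subset hκ.le hw hv, rfl⟩
  simp only [ekelandSet, mem_ofPred_eq] at hv
  rw [mem_closedBall, dist_comm]
  exact le_of_mul_le_mul_left (by linarith) hκ

theorem LowerSemicontinuous.exists_ekeland [CompleteSpace Y] (hJ : LowerSemicontinuous J)
    (hJb : BddBelow (range J)) (hκ : 0 < κ) (x : Y) :
    ∃ y, J y + κ * dist x y ≤ J x ∧ ∀ w ≠ y, J y < J w + κ * dist y w := by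
  choose F hF_mem hF_ball using fun (z : Y) (n : ℕ) =>
    exists_mem_ekelandSet_subset_closedBall hJb hκ z (Nat.one_div_pos_of_nat (n := n))
  let y : ℕ → Y := fun n => Nat.rec (F x 0) (fun k z => F z (k + 1)) n
  have hanti : Antitone fun n => ekelandSet J κ (y n) :=
    antitone_nat_of_succ_le fun n => ekelandSet_subset hκ.le (hF_mem (y n) (n + 1))
  have hball : ∀ n, ekelandSet J κ (y n) ⊆ closedBall (y n) (1 / ((n : ℝ) + 1)) := by
    rintro (_ | n)
    · exact hF_ball x 0
    · exact hF_ball (y n) (n + 1)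
  have hdiam : ∀ n, ∀ p ∈ ekelandSet J κ (y n), ∀ q ∈ ekelandSet J κ (y n),
      dist p q ≤ 2 * (1 / ((n : ℝ) + 1)) := fun n p hp q hq => by
    linarith [dist_triangle_right p q (y n), mem_closedBall.1 (hball n hp),
      mem_closedBall.1 (hball n hq)]
  have hmem : ∀ n m, n ≤ m → y m ∈ ekelandSet J κ (y n) := fun n m h =>
    hanti h (mem_ekelandSet_self _)
  have hrad : Tendsto (fun n : ℕ => 2 * (1 / ((n : ℝ) + 1))) atTop (𝓝 0) := by
    simpa using tendsto_one_div_add_atTop_nhds_zero_nat.const_mul (2 : ℝ)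
  obtain ⟨p, hp⟩ := cauchySeq_tendsto_of_complete <| cauchySeq_of_le_tendsto_0 _
    (fun n m N hn hm => hdiam N _ (hmem N n hn) _ (hmem N m hm)) hrad
  have hpS : ∀ n, p ∈ ekelandSet J κ (y n) := fun n =>
    (hJ.isClosed_ekelandSet _).mem_of_tendsto hp (eventually_atTop.2 ⟨n, hmem n⟩)
  refine ⟨p, ekelandSet_subset hκ.le (hF_mem x 0) (hpS 0), fun w hw => ?_⟩
  by_contra! hwp
  have hwS : ∀ n, w ∈ ekelandSet J κ (y n) := fun n => ekelandSet_subset hκ.le (hpS n) hwp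
  exact hw (dist_le_zero.1 (ge_of_tendsto' hrad fun n => hdiam n _ (hwS n) _ (hpS n)))

end Ekeland

section MountainPass

variable {X : Type*} [MetricSpace X] {I : X → EReal} {lam : ℝ}

lemma ofReal_le_metricSlope_of_tendsto (hbot : ∀ z, I z ≠ ⊥) {x : X} {ξ T : ℝ}
    (hx : I x = ξ) {w : ℕ → X} {g : ℕ → ℝ} (hw : Tendsto w atTop (𝓝 x)) (hwx : ∀ n, w n ≠ x)
    (hg : Tendsto g atTop (𝓝 T))
    (hle : ∀ n, I (w n) ≤ ((ξ - g n * dist x (w n) : ℝ) : EReal)) :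
    ENNReal.ofReal T ≤ metricSlope I x := by
  have hquot : ∀ n, ENNReal.ofReal (g n) ≤
      ENNReal.ofReal ((max (I x - I (w n)) 0).toReal / dist x (w n)) := by
    intro n
    have hd : 0 < dist x (w n) := dist_pos.2 (hwx n).symm
    have hlt : I (w n) ≠ ⊤ := ne_top_of_le_ne_top (EReal.coe_ne_top _) (hle n)
    obtain ⟨b, hb⟩ : ∃ b : ℝ, I (w n) = b := ⟨_, (EReal.coe_toReal hlt (hbot _)).symm⟩
    have hbξ := hle n
    rw [hb, EReal.coe_le_coe_iff] at hbξ
    rw [hx, hb, EReal.toReal_max_coe_sub_coe_zero]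
    refine ENNReal.ofReal_le_ofReal ((le_div_iff₀ hd).2 ?_)
    exact (by linarith : g n * dist x (w n) ≤ ξ - b).trans (le_max_left _ _)
  rw [metricSlope, if_neg (by simp [hx])]
  have hw' : Tendsto w atTop (𝓝[≠] x) := tendsto_nhdsWithin_iff.2 ⟨hw, Eventually.of_forall hwx⟩
  calc ENNReal.ofReal T = limsup (fun n => ENNReal.ofReal (g n)) atTop :=
        ((ENNReal.continuous_ofReal.tendsto T).comp hg).limsup_eq.symm
    _ ≤ limsup (fun n => ENNReal.ofReal ((max (I x - I (w n)) 0).toReal / dist x (w n))) atTop :=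
        limsup_le_limsup (Eventually.of_forall hquot)
    _ ≤ _ := hw'.limsup_comp_le_limsup
        (u := fun y => ENNReal.ofReal ((max (I x - I y) 0).toReal / dist x y))

lemma metricSlope_le_ofReal_of_eventually {x : X} {ξ ε : ℝ} (hx : I x = ξ) (hε : 0 ≤ ε)
    (h : ∀ᶠ w in 𝓝[≠] x, ((ξ - ε * dist x w : ℝ) : EReal) ≤ I w) :
    metricSlope I x ≤ ENNReal.ofReal ε := by
  rw [metricSlope, if_neg (by simp [hx])]
  refine limsup_le_of_le (by isBoundedDefault) ?_
  filter_upwards [h, self_mem_nhdsWithin] with w hw hwx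
  refine ENNReal.ofReal_le_ofReal ?_
  induction hI : I w using EReal.rec with
  | bot => exact absurd (le_bot_iff.1 (hI ▸ hw)) (EReal.coe_ne_bot _)
  | top => simp [hx, hε]
  | coe b =>
    rw [hI, EReal.coe_le_coe_iff] at hw
    rw [hx, EReal.toReal_max_coe_sub_coe_zero, div_le_iff₀ (dist_pos.2 (Ne.symm hwx))]
    exact max_le (by linarith) (by positivity)

lemma exists_lt_of_ofReal_lt_metricSlope {x : X} {ξ ε r : ℝ} (hx : I x = ξ) (hε : 0 ≤ ε)
    (hr : 0 < r) (h : ENNReal.ofReal ε < metricSlope I x) :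
    ∃ w ≠ x, dist x w < r ∧ I w < ((ξ - ε * dist x w : ℝ) : EReal) := by
  have hfreq : ∃ᶠ w in 𝓝[≠] x, I w < ((ξ - ε * dist x w : ℝ) : EReal) := by
    by_contra hne
    simp only [not_frequently, not_lt] at hne
    exact (metricSlope_le_ofReal_of_eventually hx hε hne).not_gt h
  obtain ⟨w, hw, hwr, hwx⟩ := (hfreq.and_eventually (inter_mem
    (mem_nhdsWithin_of_mem_nhds (ball_mem_nhds x hr)) self_mem_nhdsWithin)).exists
  exact ⟨w, hwx, by rwa [dist_comm, ← mem_ball], hw⟩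

lemma metricSlope_eq_zero_of_forall_le {x : X} {ξ K : ℝ} (hK : 0 ≤ K) (hx : I x = ξ)
    (h : ∀ y, ((ξ - K * dist x y ^ 2 : ℝ) : EReal) ≤ I y) : metricSlope I x = 0 := by
  have hsmall : ∀ ε > 0, metricSlope I x ≤ ENNReal.ofReal ε := fun ε hε =>
    metricSlope_le_ofReal_of_eventually hx hε.le <| by
      filter_upwards [mem_nhdsWithin_of_mem_nhds
        (ball_mem_nhds x (show 0 < ε / (K + 1) by positivity))] with y hy
      refine (EReal.coe_le_coe_iff.2 ?_).trans (h y)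
      rw [mem_ball, dist_comm, lt_div_iff₀ (by positivity)] at hy
      nlinarith [dist_nonneg (x := x) (y := y)]
  refine le_antisymm ?_ bot_le
  simpa using ge_of_tendsto' (ENNReal.tendsto_ofReal tendsto_one_div_add_atTop_nhds_zero_nat)
    fun n => hsmall _ Nat.one_div_pos_of_nat

lemma LowerSemicontinuous.clampToReal (hlsc : LowerSemicontinuous I) {a b : ℝ}
    (hab : a ≤ b) : LowerSemicontinuous fun x => EReal.clampToReal a b (I x) :=
  (EReal.continuous_clampToReal hab).comp_lowerSemicontinuous hlsc (EReal.monotone_clampToReal hab)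

/-- Ekeland's principle for the truncation of `I` to `[a, b]`, with constant `ε / 2`, gives a
point `y` near `x`; `I y` cannot lie in `[a, b]`, as a descent of slope `ε` from `y` would
contradict the minimality of `y`. -/
lemma exists_dist_le_lt_of_forall_lt_metricSlope [CompleteSpace X]
    (hlsc : LowerSemicontinuous I) (hbot : ∀ z, I z ≠ ⊥) {a b ε r : ℝ} (hab : a ≤ b)
    (hε : 0 < ε) (hr : 0 < r)
    (hslope : ∀ u, (a : EReal) ≤ I u → I u ≤ b → ENNReal.ofReal ε < metricSlope I u)
    {x : X} (hx : I x ≤ b) : ∃ y, dist x y ≤ 2 * (b - a) / ε + r ∧ I y < a := by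
  obtain ⟨y, hyx, hy_min⟩ := (hlsc.clampToReal hab).exists_ekeland
    ⟨a, by rintro _ ⟨w, rfl⟩; exact EReal.le_clampToReal hab _⟩ (half_pos hε) x
  have hxb := EReal.clampToReal_le hab (I x)
  have hxy : dist x y ≤ 2 * (b - a) / ε := by
    rw [le_div_iff₀ hε]
    linarith [EReal.le_clampToReal hab (I y)]
  by_cases hya : I y < a
  · exact ⟨y, by linarith, hya⟩
  have hyb : I y ≤ b := by
    by_contra! hby
    rw [EReal.clampToReal_of_le hab hby.le] at hyx
    have hxy : x = y := dist_le_zero.1 (by nlinarith)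
    exact hby.not_ge (hxy ▸ hx)
  obtain ⟨v, hv⟩ : ∃ v : ℝ, I y = v :=
    ⟨_, (EReal.coe_toReal (ne_top_of_le_ne_top (EReal.coe_ne_top b) hyb) (hbot y)).symm⟩
  obtain ⟨w, hwy, hw_dist, hw_lt⟩ := exists_lt_of_ofReal_lt_metricSlope hv hε.le hr
    (hslope y (not_lt.1 hya) hyb)
  by_cases hwa : I w < a
  · exact ⟨w, by linarith [dist_triangle x y w], hwa⟩
  obtain ⟨c, hc⟩ : ∃ c : ℝ, I w = c := ⟨_, (EReal.coe_toReal hw_lt.ne_top (hbot w)).symm⟩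
  rw [hv, EReal.coe_le_coe_iff] at hyb
  rw [hv, not_lt, EReal.coe_le_coe_iff] at hya
  rw [hc, not_lt, EReal.coe_le_coe_iff] at hwa
  rw [hc, EReal.coe_lt_coe_iff] at hw_lt
  have hcb : c ≤ b := by nlinarith [dist_nonneg (x := y) (y := w)]
  have := hy_min w hwy
  rw [hv, hc, EReal.clampToReal_coe hya hyb, EReal.clampToReal_coe hwa hcb] at this
  nlinarith [dist_pos.2 hwy.symm]

lemma Epi.dist_pt_le (p q : Epi I) : dist p.pt q.pt ≤ dist p q :=
  WithLp.dist_fst_le p.1 q.1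

lemma ofReal_le_metricSlope_of_isDeltaRegular (hbot : ∀ z, I z ≠ ⊥) {x : X} {ξ δ : ℝ}
    (hx : I x = ξ) (hδ : 0 < δ) (hreg : IsDeltaRegular (epiExt I) (Epi.mk' I x ξ hx.le) δ) :
    ENNReal.ofReal δ ≤ metricSlope I x := by
  obtain ⟨U, hU, α, hα, ψ, -, hψ⟩ := hreg
  set p := Epi.mk' I x ξ hx.le
  set t : ℕ → ℝ := fun n => α / ((n : ℝ) + 1)
  have ht : Tendsto t atTop (𝓝 0) := by
    simpa [t, div_eq_mul_one_div α] using tendsto_one_div_add_atTop_nhds_zero_nat.const_mul α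
  have htI : ∀ n, t n ∈ Icc 0 α := fun n =>
    ⟨by positivity, div_le_self hα.le (by linarith [n.cast_nonneg (α := ℝ)])⟩
  have hψp := fun n => hψ p (mem_of_mem_nhds hU) (t n) (htI n)
  have hdist : ∀ n, dist (ψ p (t n)).pt x ≤ t n := fun n =>
    (Epi.dist_pt_le _ p).trans (hψp n).1
  have hval : ∀ n, I (ψ p (t n)).pt ≤ ((ξ - δ * t n : ℝ) : EReal) := fun n =>
    (ψ p (t n)).2.trans <| EReal.coe_le_coe_iff.2
      (show epiExt I (ψ p (t n)) ≤ ξ - δ * t n by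
        linarith [(hψp n).2, show epiExt I p = ξ from rfl])
  refine ofReal_le_metricSlope_of_tendsto hbot hx (w := fun n => (ψ p (t n)).pt)
    (g := fun _ => δ) ?_ ?_ tendsto_const_nhds ?_
  · exact tendsto_iff_dist_tendsto_zero.2
      (squeeze_zero (fun n => dist_nonneg) hdist ht)
  · intro n h
    have := hval n
    rw [h, hx, EReal.coe_le_coe_iff] at this
    nlinarith [(htI n).1, show 0 < t n by positivity]
  · intro n
    refine (hval n).trans (EReal.coe_le_coe_iff.2 ?_)
    nlinarith [hdist n, dist_comm x (ψ p (t n)).pt]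

lemma weakSlope_epiExt_le_metricSlope (hbot : ∀ z, I z ≠ ⊥) {x : X} {ξ : ℝ} (hx : I x = ξ) :
    weakSlope (epiExt I) (Epi.mk' I x ξ hx.le) ≤ metricSlope I x :=
  iSup₂_le fun _ hδ => ofReal_le_metricSlope_of_isDeltaRegular hbot hx hδ.1 hδ.2

lemma lscWeakSlope_le_of_metricSlope_le (hbot : ∀ z, I z ≠ ⊥) {x : X} (hxt : I x ≠ ⊤) {ε : ℝ}
    (hε0 : 0 ≤ ε) (hε1 : ε < 1) (hs : metricSlope I x ≤ ENNReal.ofReal ε) :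
    lscWeakSlope I x ≤ ENNReal.ofReal (ε / √(1 - ε ^ 2)) := by
  have hx : I x = (((I x).toReal : ℝ) : EReal) := (EReal.coe_toReal hxt (hbot x)).symm
  have hws := (weakSlope_epiExt_le_metricSlope hbot hx).trans hs
  rw [lscWeakSlope, dif_pos hx.le]
  set w := weakSlope (epiExt I) (Epi.mk' I x (I x).toReal hx.le)
  rw [if_pos (hws.trans_lt (ENNReal.ofReal_lt_one.2 hε1))]
  have hw : w.toReal ≤ ε := ENNReal.toReal_le_of_le_ofReal hε0 hws
  have hw0 : 0 ≤ w.toReal := ENNReal.toReal_nonneg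
  exact ENNReal.ofReal_le_ofReal (div_le_div₀ hε0 hw (Real.sqrt_pos.2 (by nlinarith))
    (Real.sqrt_le_sqrt (by nlinarith)))

lemma tendsto_lscWeakSlope_of_metricSlope_le (hbot : ∀ z, I z ≠ ⊥) {u : ℕ → X}
    (hu : ∀ n, I (u n) ≠ ⊤) {s : ℕ → ℝ} (hs0 : ∀ n, 0 ≤ s n) (hs_lim : Tendsto s atTop (𝓝 0))
    (hs : ∀ n, metricSlope I (u n) ≤ ENNReal.ofReal (s n)) :
    Tendsto (fun n => lscWeakSlope I (u n)) atTop (𝓝 0) := by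
  have hbound : Tendsto (fun n => ENNReal.ofReal (s n / √(1 - s n ^ 2))) atTop (𝓝 0) := by
    simpa using ENNReal.tendsto_ofReal
      (hs_lim.div ((hs_lim.pow 2).const_sub 1).sqrt (by simp))
  refine tendsto_of_tendsto_of_tendsto_of_le_of_le' tendsto_const_nhds hbound
    (Eventually.of_forall fun n => zero_le) ?_
  filter_upwards [hs_lim.eventually_lt_const one_pos] with n hn
  exact lscWeakSlope_le_of_metricSlope_le hbot (hu n) (hs0 n) hn (hs n)

lemma lscWeakSlope_eq_zero_of_metricSlope_eq_zero (hbot : ∀ z, I z ≠ ⊥) {x : X} (hxt : I x ≠ ⊤)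
    (hs : metricSlope I x = 0) : lscWeakSlope I x = 0 := by
  simpa using lscWeakSlope_le_of_metricSlope_le hbot hxt le_rfl one_pos (by simp [hs])

lemma IsUnitSpeedGeodesic.dist_left {γ : ℝ → X} {x₀ x₁ : X} (hγ : IsUnitSpeedGeodesic γ x₀ x₁)
    {t : ℝ} (ht : t ∈ Icc (0:ℝ) 1) : dist x₀ (γ t) = t * dist x₀ x₁ := by
  have h := hγ.2.2.2 0 ⟨le_rfl, zero_le_one⟩ t ht
  rwa [hγ.2.1, zero_sub, abs_neg, abs_of_nonneg ht.1] at h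

lemma GeodesicallyConvex.le_of_isUnitSpeedGeodesic (hconv : GeodesicallyConvex I lam)
    {x₀ x₁ : X} {a b : ℝ} (h₀ : I x₀ = a) (h₁ : I x₁ = b) {γ : ℝ → X}
    (hγ : IsUnitSpeedGeodesic γ x₀ x₁) {t : ℝ} (ht : t ∈ Icc (0:ℝ) 1) :
    I (γ t) ≤ (((1 - t) * a + t * b - lam / 2 * t * (1 - t) * dist x₀ x₁ ^ 2 : ℝ) : EReal) := by
  have h := hconv x₀ x₁ (by simp [h₀]) (by simp [h₁]) γ hγ t ht
  rwa [h₀, h₁, ← EReal.coe_mul, ← EReal.coe_mul, ← EReal.coe_add, ← EReal.coe_sub] at h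

/-- Move from `u` a little way along a geodesic towards `y`. -/
lemma GeodesicallyConvex.ofReal_le_metricSlope (hgeo : IsGeodesicSpace X)
    (hconv : GeodesicallyConvex I lam) (hbot : ∀ z, I z ≠ ⊥) {u y : X} (huy : u ≠ y) {a b : ℝ}
    (hu : I u = a) (hy : I y = b) :
    ENNReal.ofReal ((a - b) / dist u y + lam / 2 * dist u y) ≤ metricSlope I u := by
  obtain ⟨γ, hγ⟩ := hgeo u y
  have hd : 0 < dist u y := dist_pos.2 huy
  set t : ℕ → ℝ := fun n => 1 / ((n : ℝ) + 1)
  have ht : Tendsto t atTop (𝓝 0) := tendsto_one_div_add_atTop_nhds_zero_nat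
  have htpos : ∀ n, 0 < t n := fun n => by positivity
  have htI : ∀ n, t n ∈ Icc (0:ℝ) 1 := fun n =>
    ⟨(htpos n).le, div_le_one_of_le₀ (by linarith [n.cast_nonneg (α := ℝ)]) (by positivity)⟩
  have hdist : ∀ n, dist u (γ (t n)) = t n * dist u y := fun n => hγ.dist_left (htI n)
  refine ofReal_le_metricSlope_of_tendsto hbot hu (w := fun n => γ (t n))
    (g := fun n => (a - b) / dist u y + lam / 2 * (1 - t n) * dist u y) ?_ ?_ ?_ ?_
  · refine tendsto_iff_dist_tendsto_zero.2 ?_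
    simpa [dist_comm, hdist] using ht.mul_const (dist u y)
  · intro n h
    have := hdist n
    rw [h, dist_self] at this
    nlinarith [htpos n]
  · simpa using ((ht.const_sub 1).const_mul (lam / 2)).mul_const (dist u y) |>.const_add _
  · intro n
    refine (hconv.le_of_isUnitSpeedGeodesic hu hy hγ (htI n)).trans_eq ?_
    rw [hdist]
    congr 1
    field_simp
    ring

lemma GeodesicallyConvex.sub_add_le_mul_dist (hgeo : IsGeodesicSpace X)
    (hconv : GeodesicallyConvex I lam) (hbot : ∀ z, I z ≠ ⊥) {u y : X} {a b s : ℝ}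
    (hu : I u = a) (hy : I y = b) (hs0 : 0 ≤ s) (hs : metricSlope I u ≤ ENNReal.ofReal s) :
    a - b + lam / 2 * dist u y ^ 2 ≤ s * dist u y := by
  rcases eq_or_ne u y with rfl | huy
  · simp [EReal.coe_injective (hu.symm.trans hy)]
  have hd : 0 < dist u y := dist_pos.2 huy
  have hT := (ENNReal.ofReal_le_ofReal_iff hs0).1
    ((hconv.ofReal_le_metricSlope hgeo hbot huy hu hy).trans hs)
  calc a - b + lam / 2 * dist u y ^ 2
      = ((a - b) / dist u y + lam / 2 * dist u y) * dist u y := by field_simp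
    _ ≤ s * dist u y := by gcongr

lemma GeodesicallyConvex.coe_add_le_of_tendsto (hgeo : IsGeodesicSpace X)
    (hconv : GeodesicallyConvex I lam) (hbot : ∀ z, I z ≠ ⊥) {u : ℕ → X} {a s : ℕ → ℝ}
    {η : X} {c : ℝ} (hu : ∀ n, I (u n) = a n) (hs0 : ∀ n, 0 ≤ s n)
    (hs : ∀ n, metricSlope I (u n) ≤ ENNReal.ofReal (s n)) (huη : Tendsto u atTop (𝓝 η))
    (ha : Tendsto a atTop (𝓝 c)) (hs_lim : Tendsto s atTop (𝓝 0)) (y : X) :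
    ((c + lam / 2 * dist η y ^ 2 : ℝ) : EReal) ≤ I y := by
  induction hy : I y using EReal.rec with
  | bot => exact absurd hy (hbot y)
  | top => exact le_top
  | coe b =>
    have hdist : Tendsto (fun n => dist (u n) y) atTop (𝓝 (dist η y)) :=
      huη.dist tendsto_const_nhds
    have hlim : c - b + lam / 2 * dist η y ^ 2 ≤ 0 * dist η y :=
      le_of_tendsto_of_tendsto' (((ha.sub_const b).add ((hdist.pow 2).const_mul _)))
        (hs_lim.mul hdist) fun n => hconv.sub_add_le_mul_dist hgeo hbot (hu n) hy (hs0 n) (hs n)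
    exact EReal.coe_le_coe_iff.2 (by linarith)

lemma GeodesicallyConvex.eq_and_metricSlope_eq_zero_of_tendsto (hgeo : IsGeodesicSpace X)
    (hconv : GeodesicallyConvex I lam) (hbot : ∀ z, I z ≠ ⊥) (hlsc : LowerSemicontinuous I)
    {u : ℕ → X} {a s : ℕ → ℝ} {η : X} {c : ℝ} (hu : ∀ n, I (u n) = a n) (hs0 : ∀ n, 0 ≤ s n)
    (hs : ∀ n, metricSlope I (u n) ≤ ENNReal.ofReal (s n)) (huη : Tendsto u atTop (𝓝 η))
    (ha : Tendsto a atTop (𝓝 c)) (hs_lim : Tendsto s atTop (𝓝 0)) :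
    I η = c ∧ metricSlope I η = 0 := by
  have hquad := hconv.coe_add_le_of_tendsto hgeo hbot hu hs0 hs huη ha hs_lim
  have hIη : I η = c := by
    refine le_antisymm ?_ (by simpa using hquad η)
    by_contra! hlt
    obtain ⟨r, hcr, hrη⟩ := exists_between hlt
    obtain ⟨n, hr, hc⟩ := ((huη.eventually (hlsc η r hrη)).and
      ((EReal.tendsto_coe.2 ha).eventually_lt_const hcr)).exists
    exact lt_asymm (hu n ▸ hr) hc
  refine ⟨hIη, metricSlope_eq_zero_of_forall_le (K := |lam| / 2) (by positivity) hIη fun y => ?_⟩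
  refine (EReal.coe_le_coe_iff.2 ?_).trans (hquad y)
  nlinarith [neg_abs_le lam, sq_nonneg (dist η y)]

lemma JoinedIn.exists_chain {F : Set X} {x y : X} (h : JoinedIn F x y) {r : ℝ} (hr : 0 < r) :
    ∃ (n : ℕ) (z : ℕ → X), z 0 = x ∧ z n = y ∧ (∀ i, z i ∈ F) ∧
      ∀ i, dist (z i) (z (i + 1)) ≤ r := by
  obtain ⟨γ, hγF⟩ := h
  have huc : UniformContinuous γ.extend :=
    (CompactSpace.uniformContinuous_of_continuous γ.continuous).comp
      (LipschitzWith.projIcc zero_le_one).uniformContinuous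
  obtain ⟨δ, hδ, hγδ⟩ := Metric.uniformContinuous_iff.1 huc r hr
  obtain ⟨n, hn⟩ := exists_nat_gt (1 / δ)
  have hn0 : (0 : ℝ) < n := (one_div_pos.2 hδ).trans hn
  refine ⟨n, fun i => γ.extend (i / n), by simp, by simp [hn0.ne'], fun i => ?_, fun i => ?_⟩
  · obtain ⟨t, ht⟩ : γ.extend (i / n) ∈ range γ := γ.extend_range ▸ mem_range_self _
    show γ.extend (i / n) ∈ F
    rw [← ht]
    exact hγF t
  · refine (hγδ ?_).le
    rw [Real.dist_eq, Nat.cast_succ, ← sub_div, sub_add_cancel_left, abs_div, abs_neg, abs_one,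
      abs_of_pos hn0]
    rwa [div_lt_iff₀ hn0, mul_comm, ← div_lt_iff₀ hδ]

lemma GeodesicallyConvex.joinedIn_sublevel (hgeo : IsGeodesicSpace X)
    (hconv : GeodesicallyConvex I lam) (hbot : ∀ z, I z ≠ ⊥) {x₀ x₁ : X} {m : ℝ}
    (h₀ : I x₀ ≤ m) (h₁ : I x₁ ≤ m) :
    JoinedIn {x | I x ≤ ((m + |lam| / 8 * dist x₀ x₁ ^ 2 : ℝ) : EReal)} x₀ x₁ := by
  obtain ⟨γ, hγ⟩ := hgeo x₀ x₁
  obtain ⟨a, ha⟩ : ∃ a : ℝ, I x₀ = a :=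
    ⟨_, (EReal.coe_toReal (ne_top_of_le_ne_top (EReal.coe_ne_top m) h₀) (hbot x₀)).symm⟩
  obtain ⟨b, hb⟩ : ∃ b : ℝ, I x₁ = b :=
    ⟨_, (EReal.coe_toReal (ne_top_of_le_ne_top (EReal.coe_ne_top m) h₁) (hbot x₁)).symm⟩
  rw [ha, EReal.coe_le_coe_iff] at h₀
  rw [hb, EReal.coe_le_coe_iff] at h₁
  refine JoinedIn.ofLine hγ.1 hγ.2.1 hγ.2.2.1 (image_subset_iff.2 fun t ht =>
    (hconv.le_of_isUnitSpeedGeodesic ha hb hγ ht).trans (EReal.coe_le_coe_iff.2 ?_))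
  obtain ⟨ht0, ht1⟩ := ht
  have htt : t * (1 - t) ≤ 1 / 4 := by nlinarith [sq_nonneg (t - 1 / 2)]
  nlinarith [mul_nonneg ht0 (sub_nonneg.2 ht1), neg_abs_le lam, abs_nonneg lam,
    mul_le_mul_of_nonneg_right htt (sq_nonneg (dist x₀ x₁)),
    mul_nonneg (mul_nonneg ht0 (sub_nonneg.2 ht1)) (sq_nonneg (dist x₀ x₁))]

lemma GeodesicallyConvex.joinedIn_sublevel_of_chain (hgeo : IsGeodesicSpace X)
    (hconv : GeodesicallyConvex I lam) (hbot : ∀ z, I z ≠ ⊥) {z : ℕ → X} {m D : ℝ}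
    (hz : ∀ i, I (z i) ≤ m) (hD : ∀ i, dist (z i) (z (i + 1)) ≤ D) (n : ℕ) :
    JoinedIn {x | I x ≤ ((m + |lam| / 8 * D ^ 2 : ℝ) : EReal)} (z 0) (z n) := by
  induction n with
  | zero =>
    refine JoinedIn.refl ((hz 0).trans (EReal.coe_le_coe_iff.2 ?_))
    linarith [show 0 ≤ |lam| / 8 * D ^ 2 by positivity]
  | succ n ih =>
    refine ih.trans ((hconv.joinedIn_sublevel hgeo hbot (hz n) (hz (n + 1))).mono
      fun x hx => hx.trans (EReal.coe_le_coe_iff.2 ?_))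
    have := pow_le_pow_left₀ dist_nonneg (hD n) 2
    have := abs_nonneg lam
    nlinarith

noncomputable def mountainPassLevel (I : X → EReal) (μ ν : X) : EReal :=
  sInf {a : EReal | ∃ γ : ℝ → X, ContinuousOn γ (Icc 0 1) ∧ γ 0 = μ ∧ γ 1 = ν ∧
    a = ⨆ t ∈ Icc (0:ℝ) 1, I (γ t)}

lemma mountainPassLevel_le_of_joinedIn {μ ν : X} {M : EReal} (h : JoinedIn {x | I x ≤ M} μ ν) :
    mountainPassLevel I μ ν ≤ M := by
  obtain ⟨γ, hγ⟩ := h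
  refine le_trans (sInf_le ⟨γ.extend, γ.continuous_extend.continuousOn, γ.extend_zero,
    γ.extend_one, rfl⟩) (iSup₂_le fun t ht => ?_)
  rw [γ.extend_apply ht]
  exact hγ _

lemma joinedIn_of_mountainPassLevel_lt {μ ν : X} {M : EReal} (h : mountainPassLevel I μ ν < M) :
    JoinedIn {x | I x ≤ M} μ ν := by
  obtain ⟨_, ⟨γ, hγ, h0, h1, rfl⟩, hlt⟩ := sInf_lt_iff.1 h
  exact JoinedIn.ofLine hγ h0 h1 (image_subset_iff.2 fun t ht =>
    (le_iSup₂ (f := fun t _ => I (γ t)) t ht).trans hlt.le)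

/-- Sample the path at mesh `r`, move each sample into `{I ≤ a}` and join consecutive samples by
geodesics. -/
lemma GeodesicallyConvex.joinedIn_sublevel_of_forall_exists_dist_le (hgeo : IsGeodesicSpace X)
    (hconv : GeodesicallyConvex I lam) (hbot : ∀ z, I z ≠ ⊥) {μ ν : X} {a b R r : ℝ}
    (hr : 0 < r) (hμ : I μ ≤ a) (hν : I ν ≤ a) (hpath : JoinedIn {x | I x ≤ b} μ ν)
    (hnear : ∀ x, I x ≤ b → ∃ y, dist x y ≤ R ∧ I y ≤ a) :
    JoinedIn {x | I x ≤ ((a + |lam| / 8 * (2 * R + r) ^ 2 : ℝ) : EReal)} μ ν := by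
  obtain ⟨n, x, hx0, hxn, hxF, hxd⟩ := hpath.exists_chain hr
  have hR : 0 ≤ R := by
    obtain ⟨_, h, -⟩ := hnear μ hpath.source_mem
    exact dist_nonneg.trans h
  choose! Y hY using hnear
  set z : ℕ → X := fun i => if I (x i) ≤ a then x i else Y (x i)
  have hz : ∀ i, dist (x i) (z i) ≤ R ∧ I (z i) ≤ a := fun i => by
    by_cases h : I (x i) ≤ a
    · simp [z, h, hR]
    · simpa [z, h] using hY _ (hxF i)
  have hchain := hconv.joinedIn_sublevel_of_chain hgeo hbot (D := 2 * R + r) (fun i => (hz i).2)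
    (fun i => (dist_triangle4 _ (x i) (x (i + 1)) _).trans (by
      linarith [(hz i).1, (hz (i + 1)).1, hxd i, dist_comm (z i) (x i)])) n
  rwa [show z 0 = μ by simp [z, hx0, hμ], show z n = ν by simp [z, hxn, hν]] at hchain

lemma GeodesicallyConvex.exists_almost_critical [CompleteSpace X] (hgeo : IsGeodesicSpace X)
    (hconv : GeodesicallyConvex I lam) (hbot : ∀ z, I z ≠ ⊥) (hlsc : LowerSemicontinuous I)
    {μ ν : X} {c c₁ : ℝ} (hμ : I μ ≤ c₁) (hν : I ν ≤ c₁) (hc : mountainPassLevel I μ ν = c)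
    (hc₁ : c₁ < c) {ε δ : ℝ} (hε : 0 < ε) (hδ : 0 < δ) :
    ∃ u, ∃ v : ℝ, I u = v ∧ |v - c| ≤ δ ∧ metricSlope I u ≤ ENNReal.ofReal ε := by
  -- geodesics between moved samples have length at most `ρ K`, and must cost less than `ρ`
  set K := 8 / ε + 3
  set ρ := min (min δ (c - c₁)) (1 / (|lam| * K ^ 2 + 1))
  have hρ : 0 < ρ := lt_min (lt_min hδ (by linarith)) (by positivity)
  have hρδ : ρ ≤ δ := (min_le_left _ _).trans (min_le_left _ _)
  have hρc : ρ ≤ c - c₁ := (min_le_left _ _).trans (min_le_right _ _)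
  have hρK : ρ * (|lam| * K ^ 2 + 1) ≤ 1 := (le_div_iff₀ (by positivity)).1 (min_le_right _ _)
  by_contra! hno
  have hnear : ∀ x, I x ≤ ((c + ρ : ℝ) : EReal) →
      ∃ y, dist x y ≤ 2 * (c + ρ - (c - ρ)) / ε + ρ ∧ I y ≤ ((c - ρ : ℝ) : EReal) := by
    refine fun x hx => (exists_dist_le_lt_of_forall_lt_metricSlope hlsc hbot (by linarith) hε hρ
      (fun u hu₁ hu₂ => ?_) hx).imp fun y hy => ⟨hy.1, hy.2.le⟩
    obtain ⟨v, hv⟩ : ∃ v : ℝ, I u = v :=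
      ⟨_, (EReal.coe_toReal (ne_top_of_le_ne_top (EReal.coe_ne_top _) hu₂) (hbot u)).symm⟩
    rw [hv, EReal.coe_le_coe_iff] at hu₁ hu₂
    exact hno u v hv (abs_le.2 ⟨by linarith, by linarith⟩)
  have hpath : JoinedIn {x | I x ≤ ((c + ρ : ℝ) : EReal)} μ ν :=
    joinedIn_of_mountainPassLevel_lt (hc ▸ EReal.coe_lt_coe_iff.2 (by linarith))
  have hlow := mountainPassLevel_le_of_joinedIn <| hconv.joinedIn_sublevel_of_forall_exists_dist_le
    hgeo hbot hρ (hμ.trans (EReal.coe_le_coe_iff.2 (by linarith)))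
    (hν.trans (EReal.coe_le_coe_iff.2 (by linarith))) hpath hnear
  rw [hc, EReal.coe_le_coe_iff] at hlow
  have hR : 2 * (2 * (c + ρ - (c - ρ)) / ε + ρ) + ρ = ρ * K := by
    simp only [K]; field_simp; ring
  rw [hR] at hlow
  nlinarith [abs_nonneg lam, mul_le_mul_of_nonneg_left hρK hρ.le]

lemma GeodesicallyConvex.exists_palaisSmale_sequence [CompleteSpace X] (hgeo : IsGeodesicSpace X)
    (hconv : GeodesicallyConvex I lam) (hbot : ∀ z, I z ≠ ⊥) (hlsc : LowerSemicontinuous I)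
    {μ ν : X} {c c₁ : ℝ} (hμ : I μ ≤ c₁) (hν : I ν ≤ c₁) (hc : mountainPassLevel I μ ν = c)
    (hc₁ : c₁ < c) :
    ∃ (u : ℕ → X) (a s : ℕ → ℝ), (∀ n, I (u n) = a n) ∧ Tendsto a atTop (𝓝 c) ∧
      (∀ n, 0 ≤ s n) ∧ Tendsto s atTop (𝓝 0) ∧
      ∀ n, metricSlope I (u n) ≤ ENNReal.ofReal (s n) := by
  choose u a hu ha hs using fun n : ℕ => hconv.exists_almost_critical hgeo hbot hlsc hμ hν hc hc₁
    (Nat.one_div_pos_of_nat (n := n)) (Nat.one_div_pos_of_nat (n := n))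
  refine ⟨u, a, fun n => 1 / ((n : ℝ) + 1), hu, ?_, fun n => by positivity,
    tendsto_one_div_add_atTop_nhds_zero_nat, hs⟩
  exact tendsto_iff_dist_tendsto_zero.2 (squeeze_zero (fun n => dist_nonneg)
    (fun n => (Real.dist_eq _ _).trans_le (ha n)) tendsto_one_div_add_atTop_nhds_zero_nat)

end MountainPass

theorem mountain_pass_lsc_general {X : Type*} [MetricSpace X] [CompleteSpace X]
    (hgeo : IsGeodesicSpace X)
    (I : X → EReal) (hbot : ∀ x, I x ≠ ⊥)
    (hlsc : LowerSemicontinuous I)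
    (lam : ℝ) (hconv : GeodesicallyConvex I lam)
    (hPS : WeakPalaisSmaleLSC I)
    (μ ν : X) (hμ : I μ ≠ ⊤) (hν : I ν ≠ ⊤)
    (c c₁ : EReal)
    (hc : c = sInf {a : EReal | ∃ γ : ℝ → X, ContinuousOn γ (Icc 0 1) ∧ γ 0 = μ ∧ γ 1 = ν ∧
        a = ⨆ t ∈ Icc (0:ℝ) 1, I (γ t)})
    (hc₁ : c₁ = max (I μ) (I ν))
    (hgt : c₁ < c) :
    ∃ η : X, I η = c ∧ metricSlope I η = 0 ∧ lscWeakSlope I η = 0 := by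
  change c = mountainPassLevel I μ ν at hc
  lift c₁ to ℝ using ⟨hc₁ ▸ max_ne_top hμ hν, hc₁ ▸ ne_bot_of_le_ne_bot (hbot μ) (le_max_left _ _)⟩
  have hμ₁ : I μ ≤ c₁ := hc₁ ▸ le_max_left _ _
  have hν₁ : I ν ≤ c₁ := hc₁ ▸ le_max_right _ _
  have hc_top : c ≠ ⊤ := ne_top_of_le_ne_top (EReal.coe_ne_top _)
    (hc ▸ mountainPassLevel_le_of_joinedIn (hconv.joinedIn_sublevel hgeo hbot hμ₁ hν₁))
  lift c to ℝ using ⟨hc_top, ne_bot_of_gt hgt⟩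
  rw [EReal.coe_lt_coe_iff] at hgt
  obtain ⟨u, a, s, hu, ha, hs0, hs, hslope⟩ :=
    hconv.exists_palaisSmale_sequence hgeo hbot hlsc hμ₁ hν₁ hc.symm hgt
  obtain ⟨η, φ, hφ, hη⟩ := hPS u c (by simpa [hu] using EReal.tendsto_coe.2 ha)
    (tendsto_lscWeakSlope_of_metricSlope_le hbot (fun n => hu n ▸ EReal.coe_ne_top _) hs0 hs hslope)
  obtain ⟨hIη, hslopeη⟩ := hconv.eq_and_metricSlope_eq_zero_of_tendsto hgeo hbot hlsc
    (fun n => hu (φ n)) (fun n => hs0 (φ n)) (fun n => hslope (φ n)) hη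
    (ha.comp hφ.tendsto_atTop) (hs.comp hφ.tendsto_atTop)
  exact ⟨η, hIη, hslopeη,
    lscWeakSlope_eq_zero_of_metricSlope_eq_zero hbot (hIη ▸ EReal.coe_ne_top c) hslopeη⟩

/-- **Mountain pass theorem for l.s.c. λ-geodesically convex functionals** (Theorem 1.1), stated
on a complete geodesic metric space (in particular on the Wasserstein space `P₂(M)` over a
complete connected smooth Riemannian manifold): if `μ, ν ∈ D(I)`, the mountain pass level `c`
between `μ` and `ν` exceeds `c₁ = max {I μ, I ν}` and `I` satisfies the weak metric Palais–Smale
condition, then there is `η` with `I η = c` and `|∂I|(η) = |dI|(η) = 0`. -/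
theorem mountain_pass_lsc {X : Type*} [MetricSpace X] [CompleteSpace X]
    (hgeo : IsGeodesicSpace X)
    (I : X → EReal) (hproper : ∃ x, I x ≠ ⊤) (hbot : ∀ x, I x ≠ ⊥)
    (hlsc : LowerSemicontinuous I)
    (lam : ℝ) (hconv : GeodesicallyConvex I lam)
    (hPS : WeakPalaisSmaleLSC I)
    (μ ν : X) (hμ : I μ ≠ ⊤) (hν : I ν ≠ ⊤)
    (c c₁ : EReal)
    (hc : c = sInf {a : EReal | ∃ γ : ℝ → X, ContinuousOn γ (Icc 0 1) ∧ γ 0 = μ ∧ γ 1 = ν ∧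
        a = ⨆ t ∈ Icc (0:ℝ) 1, I (γ t)})
    (hc₁ : c₁ = max (I μ) (I ν))
    (hgt : c₁ < c) :
    ∃ η : X, I η = c ∧ metricSlope I η = 0 ∧ lscWeakSlope I η = 0 :=
  mountain_pass_lsc_general hgeo I hbot hlsc lam hconv hPS μ ν hμ hν c c₁ hc hc₁ hgt
end

section
/- Let (X,d) be a geodesic metric space and I : X → ℝ ∪ {+∞} a proper, lower semicontinuous, λ-geodesically convex functional, and let μ, ν ∈ D(I). Let Γ be the set of continuous curves γ : [0,1] → X with γ(0) = μ, γ(1) = ν, and let Γ_epi be the set of continuous curves γ_epi : [0,1] → (epi(I), d_epi) with γ_epi(0) = (μ, I(μ)) and γ_epi(1) = (ν, I(ν)). Then the two barrier values coincide: inf_{γ_epi ∈ Γ_epi} max_{t∈[0,1]} G_I(γ_epi(t)) = inf_{γ ∈ Γ} sup_{t∈[0,1]} I(γ(t)). -/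
open Set Metric Filter
open scoped ENNReal Topology

/-!
A curve in the epigraph projects to a curve in `X` of no larger energy, because `I ≤ G_I` on
`epi(I)`. Conversely, a curve `γ` from `μ` to `ν` with `sup I ∘ γ = a < ∞` lifts to the curve in
the epigraph that climbs vertically from `(μ, I μ)` to `(μ, a)`, runs along `(γ t, a)` and descends
from `(ν, a)` to `(ν, I ν)`; its maximal `G_I`-value is `a`.
-/
def barrier {Y α : Type*} [TopologicalSpace Y] [CompleteLattice α] (J : Y → α) (y₀ y₁ : Y) : α :=
  sInf {a : α | ∃ γ : ℝ → Y, ContinuousOn γ (Icc 0 1) ∧ γ 0 = y₀ ∧ γ 1 = y₁ ∧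
    a = ⨆ t ∈ Icc (0:ℝ) 1, J (γ t)}

section Barrier

variable {Y Z α : Type*} [TopologicalSpace Y] [TopologicalSpace Z] [CompleteLattice α]

theorem barrier_eq_iInf_path (J : Y → α) (y₀ y₁ : Y) :
    barrier J y₀ y₁ = ⨅ p : Path y₀ y₁, ⨆ t, J (p t) := by
  refine le_antisymm (le_iInf fun p => sInf_le ?_) (le_sInf ?_)
  · refine ⟨p.extend, p.continuous_extend.continuousOn, p.extend_zero, p.extend_one, ?_⟩
    simp only [iSup_subtype', Path.extend_extends']
  · rintro _ ⟨γ, hγ, hγ₀, hγ₁, rfl⟩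
    refine iInf_le_of_le (Path.ofLine hγ hγ₀ hγ₁) (le_of_eq ?_)
    rw [iSup_subtype']
    rfl

theorem barrier_le_barrier_of_map {f : Y → Z} (hf : Continuous f) {J : Y → α} {K : Z → α}
    (hJK : ∀ y, K (f y) ≤ J y) (y₀ y₁ : Y) : barrier K (f y₀) (f y₁) ≤ barrier J y₀ y₁ := by
  rw [barrier_eq_iInf_path, barrier_eq_iInf_path]
  exact le_iInf fun p => iInf_le_of_le (p.map hf) (iSup_mono fun t => hJK (p t))

end Barrier

theorem Path.segment_mem_Icc {ξ a : ℝ} (hξa : ξ ≤ a) (t : unitInterval) :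
    Path.segment ξ a t ∈ Icc ξ a := by
  rw [← uIcc_of_le hξa, ← segment_eq_uIcc, ← Path.range_segment]
  exact mem_range_self t

namespace Epi

variable {X : Type*} [MetricSpace X] {I : X → EReal}

theorem le_epiExt (p : Epi I) : I p.pt ≤ epiExt I p := p.2

theorem continuous_pt : Continuous (Epi.pt : Epi I → X) :=
  continuous_fst.comp ((WithLp.prod_continuous_ofLp 2 X ℝ).comp continuous_subtype_val)

noncomputable def liftPath {x y : X} {ξ ζ : ℝ} (q : Path x y) (c : Path ξ ζ)
    (h : ∀ t, I (q t) ≤ c t) (hx : I x ≤ ξ) (hy : I y ≤ ζ) :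
    Path (Epi.mk' I x ξ hx) (Epi.mk' I y ζ hy) where
  toFun t := Epi.mk' I (q t) (c t) (h t)
  continuous_toFun := Topology.IsEmbedding.subtypeVal.isInducing.continuous_iff.2 <|
    (WithLp.prod_continuous_toLp 2 X ℝ).comp (q.continuous.prodMk c.continuous)
  source' := by simp only [q.source, c.source]
  target' := by simp only [q.target, c.target]

theorem exists_path_epiExt_le {x y : X} {ξ₀ ξ₁ a : ℝ} (q : Path x y) (hq : ∀ t, I (q t) ≤ a)
    (hx : I x ≤ ξ₀) (hy : I y ≤ ξ₁) (hξ₀ : ξ₀ ≤ a) (hξ₁ : ξ₁ ≤ a) :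
    ∃ p : Path (Epi.mk' I x ξ₀ hx) (Epi.mk' I y ξ₁ hy), ∀ t, epiExt I (p t) ≤ a := by
  have hxa : I x ≤ a := hx.trans (EReal.coe_le_coe hξ₀)
  have hya : I y ≤ a := hy.trans (EReal.coe_le_coe hξ₁)
  let up := liftPath (Path.refl x) (Path.segment ξ₀ a)
    (fun t => hx.trans (EReal.coe_le_coe (Path.segment_mem_Icc hξ₀ t).1)) hx hxa
  let across := liftPath q (Path.refl a) hq hxa hya
  let down := liftPath (Path.refl y) (Path.segment ξ₁ a)
    (fun t => hy.trans (EReal.coe_le_coe (Path.segment_mem_Icc hξ₁ t).1)) hy hya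
  refine ⟨up.trans (across.trans down.symm), fun t => ?_⟩
  have hrange : range (up.trans (across.trans down.symm)) ⊆ {p | epiExt I p ≤ a} := by
    simp only [Path.trans_range, Path.symm_range, union_subset_iff, range_subset_iff,
      mem_ofPred_eq]
    exact ⟨fun t => (Path.segment_mem_Icc hξ₀ t).2, fun _ => le_rfl,
      fun t => (Path.segment_mem_Icc hξ₁ t).2⟩
  exact hrange (mem_range_self t)

theorem barrier_epiExt_le_iSup {x y : X} (q : Path x y) (hx : I x ≠ ⊤) (hy : I y ≠ ⊤)
    (hx' : I x ≠ ⊥) (hy' : I y ≠ ⊥) :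
    barrier (fun p => (epiExt I p : EReal))
        (Epi.mk' I x (I x).toReal (EReal.coe_toReal hx hx').ge)
        (Epi.mk' I y (I y).toReal (EReal.coe_toReal hy hy').ge) ≤ ⨆ t, I (q t) := by
  set s := ⨆ t, I (q t)
  have hxs : I x ≤ s := q.source ▸ le_iSup (fun t => I (q t)) 0
  have hys : I y ≤ s := q.target ▸ le_iSup (fun t => I (q t)) 1
  rcases eq_top_or_lt_top s with hs | hs
  · exact hs ▸ le_top
  have hs_coe : ((s.toReal : ℝ) : EReal) = s :=
    EReal.coe_toReal hs.ne (ne_bot_of_le_ne_bot hx' hxs)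
  have hq : ∀ t, I (q t) ≤ s.toReal := fun t => (le_iSup (fun t => I (q t)) t).trans hs_coe.ge
  obtain ⟨p, hp⟩ := exists_path_epiExt_le q hq _ _
    (EReal.toReal_le_toReal hxs hx' hs.ne) (EReal.toReal_le_toReal hys hy' hs.ne)
  rw [barrier_eq_iInf_path, ← hs_coe]
  exact iInf_le_of_le p (iSup_le fun t => EReal.coe_le_coe (hp t))

end Epi

theorem epi_barrier_eq_barrier_general {X : Type*} [MetricSpace X]
    (I : X → EReal) (hbot : ∀ x, I x ≠ ⊥)
    (μ ν : X) (hμ : I μ ≠ ⊤) (hν : I ν ≠ ⊤) :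
    sInf {a : EReal | ∃ γepi : ℝ → Epi I, ContinuousOn γepi (Icc 0 1) ∧
        γepi 0 = Epi.mk' I μ (I μ).toReal (EReal.coe_toReal hμ (hbot μ)).ge ∧
        γepi 1 = Epi.mk' I ν (I ν).toReal (EReal.coe_toReal hν (hbot ν)).ge ∧
        a = ⨆ t ∈ Icc (0:ℝ) 1, ((epiExt I (γepi t) : ℝ) : EReal)}
      = sInf {a : EReal | ∃ γ : ℝ → X, ContinuousOn γ (Icc 0 1) ∧ γ 0 = μ ∧ γ 1 = ν ∧
        a = ⨆ t ∈ Icc (0:ℝ) 1, I (γ t)} := by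
  change barrier (fun p => (epiExt I p : EReal)) _ _ = barrier I μ ν
  refine le_antisymm ?_ (barrier_le_barrier_of_map Epi.continuous_pt Epi.le_epiExt
    (Epi.mk' I μ _ _) (Epi.mk' I ν _ _))
  rw [barrier_eq_iInf_path I]
  exact le_iInf fun q => Epi.barrier_epiExt_le_iSup q hμ hν (hbot μ) (hbot ν)

/-- The mountain pass barrier value computed over curves in the epigraph (with endpoints
`(μ, I μ)` and `(ν, I ν)`, and the epigraph extension `G_I` as energy) coincides with the
barrier value computed over curves in `X` with the energy `I` itself. -/
theorem epi_barrier_eq_barrier {X : Type*} [MetricSpace X]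
    (hgeo : IsGeodesicSpace X)
    (I : X → EReal) (hproper : ∃ x, I x ≠ ⊤) (hbot : ∀ x, I x ≠ ⊥)
    (hlsc : LowerSemicontinuous I)
    (lam : ℝ) (hconv : GeodesicallyConvex I lam)
    (μ ν : X) (hμ : I μ ≠ ⊤) (hν : I ν ≠ ⊤) :
    sInf {a : EReal | ∃ γepi : ℝ → Epi I, ContinuousOn γepi (Icc 0 1) ∧
        γepi 0 = Epi.mk' I μ (I μ).toReal (EReal.coe_toReal hμ (hbot μ)).ge ∧
        γepi 1 = Epi.mk' I ν (I ν).toReal (EReal.coe_toReal hν (hbot ν)).ge ∧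
        a = ⨆ t ∈ Icc (0:ℝ) 1, ((epiExt I (γepi t) : ℝ) : EReal)}
      = sInf {a : EReal | ∃ γ : ℝ → X, ContinuousOn γ (Icc 0 1) ∧ γ 0 = μ ∧ γ 1 = ν ∧
        a = ⨆ t ∈ Icc (0:ℝ) 1, I (γ t)} :=
  epi_barrier_eq_barrier_general I hbot μ ν hμ hν
end
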